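/- Let A ∈ M_j. Define the equivalence relation on {1,...,j} by k ∼ k' iff k = k' or a_{k,k'} > s, where s = min_{i≠l} a_{i,l}. Then ∼ is indeed an equivalence relation; in particular it is transitive: if a_{k1,k2} > s and a_{k2,k3} > s then a_{k1,k3} > s. -/
import Mathlib


/-- Membership in the class `M_j` of ultrametric matrices from the paper. -/
def MemUltra (η : ℝ) {ι : Type*} [Fintype ι] [DecidableEq ι] (A : Matrix ι ι ℝ) : Prop :=
  A.IsSymm ∧ (∀ i, A i i = 1) ∧
  (∀ i l, i ≠ l → 0 ≤ A i l ∧ A i l ≤ 1 - η) ∧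
  (∀ i l p, i ≠ l → l ≠ p → i ≠ p → min (A l p) (A i p) ≤ A i l)

/-- for `A ∈ M_j` and `s` the minimal off-diagonal entry, the relation
`k ∼ k' ↔ k = k' ∨ A k k' > s` is an equivalence relation; in particular it is transitive:
if `A k₁ k₂ > s` and `A k₂ k₃ > s` then `A k₁ k₃ > s`. -/
theorem ultrametric_relation_equivalence {η : ℝ} (hη : 0 < η) {j : ℕ} (hj : 2 ≤ j)
    (A : Matrix (Fin j) (Fin j) ℝ) (hA : MemUltra η A) (s : ℝ)
    (hs_lb : ∀ i l, i ≠ l → s ≤ A i l)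
    (hs_attained : ∃ i l, i ≠ l ∧ A i l = s) :
    Equivalence (fun k k' : Fin j => k = k' ∨ s < A k k') ∧
    (∀ k₁ k₂ k₃ : Fin j, k₁ ≠ k₂ → k₂ ≠ k₃ → k₁ ≠ k₃ →
      s < A k₁ k₂ → s < A k₂ k₃ → s < A k₁ k₃) := by
  obtain ⟨hsym, hdiag, hbound, hultra⟩ := hA
  have htrans : ∀ k₁ k₂ k₃ : Fin j, k₁ ≠ k₂ → k₂ ≠ k₃ → k₁ ≠ k₃ →
      s < A k₁ k₂ → s < A k₂ k₃ → s < A k₁ k₃ := by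
    intro k₁ k₂ k₃ h12 h23 h13 ha hb
    have key := hultra k₁ k₃ k₂ h13 (Ne.symm h23) h12
    have hA32 : A k₃ k₂ = A k₂ k₃ := by
      have := hsym; rw [Matrix.IsSymm] at this
      calc A k₃ k₂ = A.transpose k₂ k₃ := rfl
        _ = A k₂ k₃ := by rw [this]
    rw [hA32] at key
    exact lt_of_lt_of_le (lt_min hb ha) key
  refine ⟨⟨fun k => Or.inl rfl, ?_, ?_⟩, htrans⟩
  · intro k k' h
    rcases h with h | h
    · exact Or.inl h.symm
    · right
      have hA' : A k' k = A k k' := by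
        have := hsym; rw [Matrix.IsSymm] at this
        calc A k' k = A.transpose k k' := rfl
          _ = A k k' := by rw [this]
      rw [hA']; exact h
  · intro k₁ k₂ k₃ h12 h23
    rcases h12 with rfl | h12
    · exact h23
    rcases h23 with rfl | h23
    · exact Or.inr h12
    by_cases h12' : k₁ = k₂
    · subst h12'; exact Or.inr h23
    by_cases h23' : k₂ = k₃
    · subst h23'; exact Or.inr h12
    by_cases h13 : k₁ = k₃
    · exact Or.inl h13
    exact Or.inr (htrans k₁ k₂ k₃ h12' h23' h13 h12 h23)
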